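/- Assume the deterministic events ‖W‖ ≤ √(nd)+√m+√(2γ log n) and max_{1≤i≤n} ‖W_i A^T‖ ≤ (2√d+√(2γ log n))‖A‖ hold, let ε = 1/(32κ²√d) and ξ = 6, and assume σ ≤ (ε²d/(6κ²))·√n‖A‖/(√d·(√(nd)+√m+√(2γ n log n))). Then for every S ∈ N_ε ∩ N_{ξ,∞} and every 1 ≤ i ≤ n, the i-th d×d block of LS satisfies σ_min([LS]_i) ≥ (1 − ε²d)/κ². -/

import Mathlib

open MeasureTheory Matrix Filter

namespace GOPP

/-- Frobenius norm of a real matrix. -/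
noncomputable def frob {α β : Type*} [Fintype α] [Fintype β] (X : Matrix α β ℝ) : ℝ :=
  Real.sqrt (∑ i, ∑ j, X i j ^ 2)

/-- Euclidean norm of a vector. -/
noncomputable def vnorm {β : Type*} [Fintype β] (v : β → ℝ) : ℝ :=
  Real.sqrt (∑ j, v j ^ 2)

/-- Operator (spectral) norm: the supremum of ‖Xu‖ over unit vectors u. -/
noncomputable def opNorm {α β : Type*} [Fintype α] [Fintype β] (X : Matrix α β ℝ) : ℝ :=
  sSup {r : ℝ | ∃ u : β → ℝ, vnorm u = 1 ∧ r = vnorm (X.mulVec u)}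

/-- Smallest singular value: the infimum of ‖uᵀX‖ over unit vectors u (for a d×m matrix
with d ≤ m this is the d-th largest singular value; for square matrices it is σ_min). -/
noncomputable def sigmaMin {α β : Type*} [Fintype α] [Fintype β] (X : Matrix α β ℝ) : ℝ :=
  sInf {r : ℝ | ∃ u : α → ℝ, vnorm u = 1 ∧ r = vnorm (Matrix.vecMul u X)}

/-- Condition number κ = σ_max/σ_min. -/
noncomputable def kappa {d m : ℕ} (A : Matrix (Fin d) (Fin m) ℝ) : ℝ :=
  opNorm A / sigmaMin A

/-- Q is an orthogonal matrix. -/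
def IsOrth {d : ℕ} (Q : Matrix (Fin d) (Fin d) ℝ) : Prop :=
  Qᵀ * Q = 1 ∧ Q * Qᵀ = 1

/-- Nuclear norm, via the dual characterization ‖M‖_* = max_{Q ∈ O(d)} ⟨Q, M⟩. -/
noncomputable def nuclearNorm {d : ℕ} (M : Matrix (Fin d) (Fin d) ℝ) : ℝ :=
  sSup {r : ℝ | ∃ Q : Matrix (Fin d) (Fin d) ℝ, IsOrth Q ∧ r = Matrix.trace (Qᵀ * M)}

/-- The i-th d×k block of an (nd)×k block matrix. -/
def blk {n d k : ℕ} (S : Matrix (Fin n × Fin d) (Fin k) ℝ) (i : Fin n) :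
    Matrix (Fin d) (Fin k) ℝ :=
  Matrix.of fun a b => S (i, a) b

/-- The i-th diagonal d×d block of an (nd)×(nd) matrix. -/
def dblk {n d : ℕ} (G : Matrix (Fin n × Fin d) (Fin n × Fin d) ℝ) (i : Fin n) :
    Matrix (Fin d) (Fin d) ℝ :=
  Matrix.of fun a b => G (i, a) (i, b)

/-- S ∈ O(d)^{⊗n}: each of the n d×d blocks of S is orthogonal. -/
def OrthBlocks {n d : ℕ} (S : Matrix (Fin n × Fin d) (Fin d) ℝ) : Prop :=
  ∀ i, IsOrth (blk S i)

/-- Z ∈ ℝ^{nd×d}: the vertical stack of n copies of I_d. -/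
def ZStack (n d : ℕ) : Matrix (Fin n × Fin d) (Fin d) ℝ :=
  Matrix.of fun p j => if p.2 = j then 1 else 0

/-- Vertical stack of n given d×k matrices. -/
def stack {n d k : ℕ} (B : Fin n → Matrix (Fin d) (Fin k) ℝ) :
    Matrix (Fin n × Fin d) (Fin k) ℝ :=
  Matrix.of fun p b => B p.1 p.2 b

/-- d_F(X,Y) = min_{Q ∈ O(d)} ‖X − YQ‖_F. -/
noncomputable def dF {n d : ℕ} (X Y : Matrix (Fin n × Fin d) (Fin d) ℝ) : ℝ :=
  sInf {r : ℝ | ∃ Q, IsOrth Q ∧ r = frob (X - Y * Q)}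

/-- R is a polar factor P(X) of X: an orthogonal global minimizer of ‖X − Q‖_F over O(d). -/
def IsPolar {d : ℕ} (X R : Matrix (Fin d) (Fin d) ℝ) : Prop :=
  IsOrth R ∧ ∀ Q : Matrix (Fin d) (Fin d) ℝ, IsOrth Q → frob (X - R) ≤ frob (X - Q)

/-- S = P_n(X): blockwise polar factor. -/
def IsPolarBlocks {n d : ℕ} (X S : Matrix (Fin n × Fin d) (Fin d) ℝ) : Prop :=
  ∀ i, IsPolar (blk X i) (blk S i)

/-- U collects (an orthonormal basis of the span of) the top d left singular vectors of D:
U has orthonormal columns and maximizes the Ky Fan quantity trace(Uᵀ(DDᵀ)U). -/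
def IsTopSingVecs {N : Type*} [Fintype N] {d m : ℕ} (D : Matrix N (Fin m) ℝ)
    (U : Matrix N (Fin d) ℝ) : Prop :=
  Uᵀ * U = 1 ∧ ∀ Q : Matrix N (Fin d) ℝ, Qᵀ * Q = 1 →
    Matrix.trace (Qᵀ * (D * Dᵀ) * Q) ≤ Matrix.trace (Uᵀ * (D * Dᵀ) * U)

/-- (U, S, V) is a top-d singular triple of D: orthonormal U, V, diagonal nonnegative S,
DV = US, DᵀU = VS, and U spans a top-d left singular subspace. -/
def IsSVDTriple {N : Type*} [Fintype N] {d m : ℕ} (D : Matrix N (Fin m) ℝ)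
    (U : Matrix N (Fin d) ℝ) (S : Matrix (Fin d) (Fin d) ℝ)
    (V : Matrix (Fin m) (Fin d) ℝ) : Prop :=
  Vᵀ * V = 1 ∧ (∀ a b, a ≠ b → S a b = 0) ∧ (∀ a, 0 ≤ S a a) ∧
    D * V = U * S ∧ Dᵀ * U = V * S ∧ IsTopSingVecs D U

/-- The generalized power method sequence with spectral initialization, run on the data
matrix D (so with C = DDᵀ): S⁰ = P_n(U) for top singular vectors U of D, and
S^{t+1} = P_n(C Sᵗ). -/
def IsGPM {n d m : ℕ} (D : Matrix (Fin n × Fin d) (Fin m) ℝ)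
    (S : ℕ → Matrix (Fin n × Fin d) (Fin d) ℝ) : Prop :=
  (∃ U, IsTopSingVecs D U ∧ IsPolarBlocks U (S 0)) ∧
    ∀ t, IsPolarBlocks (D * Dᵀ * S t) (S (t + 1))

/-- W^(i): W with its i-th block row replaced by 0. -/
def mask {n d m : ℕ} (W : Matrix (Fin n × Fin d) (Fin m) ℝ) (i : Fin n) :
    Matrix (Fin n × Fin d) (Fin m) ℝ :=
  Matrix.of fun p b => if p.1 = i then 0 else W p b

/-- The noise matrix Δ = WAᵀZᵀ + ZAWᵀ + σWWᵀ. -/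
noncomputable def delta {n d m : ℕ} (A : Matrix (Fin d) (Fin m) ℝ)
    (W : Matrix (Fin n × Fin d) (Fin m) ℝ) (σ : ℝ) :
    Matrix (Fin n × Fin d) (Fin n × Fin d) ℝ :=
  W * Aᵀ * (ZStack n d)ᵀ + ZStack n d * A * Wᵀ + σ • (W * Wᵀ)

/-- The i-th block column Δ_i = WAᵀ + ZAW_iᵀ + σWW_iᵀ of Δ. -/
noncomputable def deltaCol {n d m : ℕ} (A : Matrix (Fin d) (Fin m) ℝ)
    (W : Matrix (Fin n × Fin d) (Fin m) ℝ) (σ : ℝ) (i : Fin n) :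
    Matrix (Fin n × Fin d) (Fin d) ℝ :=
  W * Aᵀ + ZStack n d * A * (blk W i)ᵀ + σ • (W * (blk W i)ᵀ)

/-- The operator L S = C S/(n‖A‖²) with C = ZAAᵀZᵀ + σΔ. -/
noncomputable def Lop {n d m : ℕ} (A : Matrix (Fin d) (Fin m) ℝ)
    (W : Matrix (Fin n × Fin d) (Fin m) ℝ) (σ : ℝ)
    (S : Matrix (Fin n × Fin d) (Fin d) ℝ) : Matrix (Fin n × Fin d) (Fin d) ℝ :=
  ((n : ℝ) * opNorm A ^ 2)⁻¹ •
    ((ZStack n d * A * Aᵀ * (ZStack n d)ᵀ + σ • delta A W σ) * S)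

/-- √(nd) + √m + √(2γ n log n). -/
noncomputable def bnd1 (n d m : ℕ) (γ : ℝ) : ℝ :=
  Real.sqrt ((n : ℝ) * d) + Real.sqrt (m : ℝ) + Real.sqrt (2 * γ * n * Real.log n)

/-- √(nd) + √m + √(2γ log n). -/
noncomputable def bnd2 (n d m : ℕ) (γ : ℝ) : ℝ :=
  Real.sqrt ((n : ℝ) * d) + Real.sqrt (m : ℝ) + Real.sqrt (2 * γ * Real.log n)

/-- The basin of attraction N_ε. -/
def memNeps {n d : ℕ} (ε : ℝ) (S : Matrix (Fin n × Fin d) (Fin d) ℝ) : Prop :=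
  OrthBlocks S ∧ dF S (ZStack n d) ≤ ε * Real.sqrt ((n : ℝ) * d)

/-- The basin of attraction N_{ξ,∞}. -/
def memNxi {n d m : ℕ} (W : Matrix (Fin n × Fin d) (Fin m) ℝ) (γ ξ : ℝ)
    (S : Matrix (Fin n × Fin d) (Fin d) ℝ) : Prop :=
  OrthBlocks S ∧ ∀ i, frob (blk W i * Wᵀ * S) ≤ ξ * Real.sqrt (d : ℝ) * bnd1 n d m γ ^ 2

/-- The distribution of a matrix with i.i.d. standard Gaussian N(0,1) entries. -/
noncomputable def stdGaussian (ι κ : Type*) [Fintype ι] [Fintype κ] :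
    Measure (ι → κ → ℝ) :=
  Measure.pi fun _ : ι => Measure.pi fun _ : κ => ProbabilityTheory.gaussianReal 0 1

/-!
Write `T = ∑ⱼ Sⱼ = Zᵀ S`, so that `n ‖A‖² [L S]ᵢ = A Aᵀ T + σ Nᵢ` with `Nᵢ` the `i`-th block of
`Δ S`. For a unit vector `u` put `y = uᵀ A Aᵀ`; then `‖y‖ ≥ σ_min(A)²`. If `Q` is orthogonal,
polarization gives `⟨y Sⱼ, y Q⟩ ≥ (1 - ‖Sⱼ - Q‖_F² / 2) ‖y‖²` for each block, and summing,
`‖y T‖ ≥ (n - ‖S - Z Q‖_F² / 2) ‖y‖`; taking the infimum over `Q`,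
`‖y T‖ ≥ (n - ε² n d / 2) σ_min(A)²`. The three terms of `uᵀ Nᵢ` are bounded by the hypotheses on
`‖W‖`, `‖Wᵢ Aᵀ‖` and by the `N_{ξ,∞}` bound on `Wᵢ Wᵀ S`, and the condition on `σ` makes
`σ ‖uᵀ Nᵢ‖ ≤ ε² n d σ_min(A)² / 2`. Dividing by `n ‖A‖²` leaves `(1 - ε² d) / κ²`.
-/

section VectorNorm

variable {ι : Type*} [Fintype ι]

lemma vnorm_eq_norm (v : ι → ℝ) : vnorm v = ‖WithLp.toLp 2 v‖ := by
  simp [vnorm, EuclideanSpace.norm_eq]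

lemma vnorm_nonneg (v : ι → ℝ) : 0 ≤ vnorm v := Real.sqrt_nonneg _

lemma vnorm_smul (c : ℝ) (v : ι → ℝ) : vnorm (c • v) = |c| * vnorm v := by
  simp only [vnorm_eq_norm, WithLp.toLp_smul, norm_smul, Real.norm_eq_abs]

lemma vnorm_sub_le_vnorm_add (u v : ι → ℝ) : vnorm u - vnorm v ≤ vnorm (u + v) := by
  simpa only [vnorm_eq_norm, WithLp.toLp_add, norm_neg, sub_neg_eq_add] using
    norm_sub_norm_le (WithLp.toLp 2 u) (-WithLp.toLp 2 v)

lemma vnorm_add_le (u v : ι → ℝ) : vnorm (u + v) ≤ vnorm u + vnorm v := by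
  simpa only [vnorm_eq_norm, WithLp.toLp_add] using norm_add_le _ _

lemma vnorm_sum_le {κ : Type*} (s : Finset κ) (f : κ → ι → ℝ) :
    vnorm (∑ k ∈ s, f k) ≤ ∑ k ∈ s, vnorm (f k) := by
  simpa only [vnorm_eq_norm, WithLp.toLp_sum] using norm_sum_le _ _

lemma dotProduct_self_eq_vnorm_sq (v : ι → ℝ) : v ⬝ᵥ v = vnorm v ^ 2 := by
  rw [vnorm, Real.sq_sqrt (Finset.sum_nonneg fun _ _ => sq_nonneg _)]
  simp [dotProduct, sq]

lemma dotProduct_le_vnorm_mul_vnorm (u v : ι → ℝ) : u ⬝ᵥ v ≤ vnorm u * vnorm v := by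
  simpa [vnorm_eq_norm, EuclideanSpace.inner_toLp_toLp, dotProduct_comm] using
    real_inner_le_norm (WithLp.toLp 2 u) (WithLp.toLp 2 v)

lemma exists_vnorm_eq_one [Nonempty ι] : ∃ u : ι → ℝ, vnorm u = 1 := by
  classical
  obtain ⟨i⟩ := ‹Nonempty ι›
  exact ⟨Pi.single i 1, by simp [vnorm_eq_norm]⟩

end VectorNorm

section MatrixNorms

variable {α β : Type*} [Fintype α] [Fintype β]

lemma frob_nonneg (X : Matrix α β ℝ) : 0 ≤ frob X := Real.sqrt_nonneg _

lemma frob_sq (X : Matrix α β ℝ) : frob X ^ 2 = ∑ i, ∑ j, X i j ^ 2 :=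
  Real.sq_sqrt (Finset.sum_nonneg fun _ _ => Finset.sum_nonneg fun _ _ => sq_nonneg _)

lemma vnorm_vecMul_le_frob_mul (v : α → ℝ) (X : Matrix α β ℝ) :
    vnorm (v ᵥ* X) ≤ frob X * vnorm v := by
  rw [vnorm, vnorm, frob, ← Real.sqrt_mul' _ (Finset.sum_nonneg fun _ _ => sq_nonneg _),
    Finset.sum_comm, Finset.sum_mul]
  refine Real.sqrt_le_sqrt (Finset.sum_le_sum fun j _ => ?_)
  simpa [Matrix.vecMul, dotProduct, mul_comm] using
    Finset.sum_mul_sq_le_sq_mul_sq Finset.univ (fun i => X i j) v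

open scoped Matrix.Norms.L2Operator in
lemma opNorm_eq_l2_opNorm [DecidableEq β] (X : Matrix α β ℝ) : opNorm X = ‖X‖ := by
  rw [Matrix.l2_opNorm_def, ← ContinuousLinearMap.sSup_sphere_eq_norm, opNorm]
  congr 1
  ext r
  constructor
  · rintro ⟨u, hu, rfl⟩
    exact ⟨WithLp.toLp 2 u, by simpa [vnorm_eq_norm] using hu, by simp [vnorm_eq_norm]⟩
  · rintro ⟨x, hx, rfl⟩
    exact ⟨x.ofLp, by simpa [vnorm_eq_norm] using hx, by rw [vnorm_eq_norm]; rfl⟩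

open scoped Matrix.Norms.L2Operator in
lemma vnorm_mulVec_le_opNorm_mul (X : Matrix α β ℝ) (v : β → ℝ) :
    vnorm (X *ᵥ v) ≤ opNorm X * vnorm v := by
  classical
  simpa [opNorm_eq_l2_opNorm, vnorm_eq_norm] using Matrix.l2_opNorm_mulVec X (WithLp.toLp 2 v)

open scoped Matrix.Norms.L2Operator in
lemma opNorm_transpose (X : Matrix α β ℝ) : opNorm Xᵀ = opNorm X := by
  classical
  rw [opNorm_eq_l2_opNorm, opNorm_eq_l2_opNorm, ← Matrix.conjTranspose_eq_transpose_of_trivial,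
    Matrix.l2_opNorm_conjTranspose]

open scoped Matrix.Norms.L2Operator in
lemma opNorm_nonneg (X : Matrix α β ℝ) : 0 ≤ opNorm X := by
  classical
  exact (opNorm_eq_l2_opNorm X).symm ▸ norm_nonneg X

lemma vnorm_vecMul_le_opNorm_mul (v : α → ℝ) (X : Matrix α β ℝ) :
    vnorm (v ᵥ* X) ≤ opNorm X * vnorm v := by
  simpa [Matrix.mulVec_transpose, opNorm_transpose] using vnorm_mulVec_le_opNorm_mul Xᵀ v

lemma sigmaMin_nonneg (X : Matrix α β ℝ) : 0 ≤ sigmaMin X :=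
  Real.sInf_nonneg fun _ ⟨_, _, hr⟩ => hr ▸ vnorm_nonneg _

lemma sigmaMin_le_vnorm_vecMul (X : Matrix α β ℝ) {u : α → ℝ} (hu : vnorm u = 1) :
    sigmaMin X ≤ vnorm (u ᵥ* X) :=
  csInf_le ⟨0, fun _ ⟨_, _, hr⟩ => hr ▸ vnorm_nonneg _⟩ ⟨u, hu, rfl⟩

lemma le_sigmaMin [Nonempty α] (X : Matrix α β ℝ) {b : ℝ}
    (h : ∀ u : α → ℝ, vnorm u = 1 → b ≤ vnorm (u ᵥ* X)) : b ≤ sigmaMin X := by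
  obtain ⟨u, hu⟩ := exists_vnorm_eq_one (ι := α)
  exact le_csInf ⟨_, u, hu, rfl⟩ fun _ ⟨v, hv, hr⟩ => hr ▸ h v hv

lemma sigmaMin_le_opNorm [Nonempty α] (X : Matrix α β ℝ) : sigmaMin X ≤ opNorm X := by
  obtain ⟨u, hu⟩ := exists_vnorm_eq_one (ι := α)
  simpa [hu] using (sigmaMin_le_vnorm_vecMul X hu).trans (vnorm_vecMul_le_opNorm_mul u X)

lemma sigmaMin_sq_le_vnorm_vecMul_mul_transpose (X : Matrix α β ℝ) {u : α → ℝ}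
    (hu : vnorm u = 1) : sigmaMin X ^ 2 ≤ vnorm (u ᵥ* (X * Xᵀ)) :=
  calc sigmaMin X ^ 2 ≤ vnorm (u ᵥ* X) ^ 2 :=
        pow_le_pow_left₀ (sigmaMin_nonneg X) (sigmaMin_le_vnorm_vecMul X hu) 2
    _ = u ᵥ* (X * Xᵀ) ⬝ᵥ u := by
        rw [← dotProduct_self_eq_vnorm_sq, ← Matrix.vecMul_vecMul, Matrix.vecMul_transpose,
          ← Matrix.dotProduct_mulVec]
        exact dotProduct_comm _ _
    _ ≤ vnorm (u ᵥ* (X * Xᵀ)) := by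
        simpa [hu] using dotProduct_le_vnorm_mul_vnorm (u ᵥ* (X * Xᵀ)) u

end MatrixNorms

section Orthogonal

variable {d : ℕ}

lemma isOrth_one : IsOrth (1 : Matrix (Fin d) (Fin d) ℝ) := by
  constructor <;> simp

lemma frob_sq_of_isOrth {Q : Matrix (Fin d) (Fin d) ℝ} (hQ : IsOrth Q) : frob Q ^ 2 = d := by
  have htrace : (Qᵀ * Q).trace = ∑ a, ∑ b, Q a b ^ 2 := by
    rw [Matrix.trace, Finset.sum_comm]
    simp [Matrix.mul_apply, sq]
  rw [frob_sq, ← htrace, hQ.1, Matrix.trace_one, Fintype.card_fin]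

lemma vnorm_vecMul_of_isOrth {Q : Matrix (Fin d) (Fin d) ℝ} (hQ : IsOrth Q) (y : Fin d → ℝ) :
    vnorm (y ᵥ* Q) = vnorm y := by
  refine (pow_left_inj₀ (vnorm_nonneg _) (vnorm_nonneg _) two_ne_zero).1 ?_
  rw [← dotProduct_self_eq_vnorm_sq, ← dotProduct_self_eq_vnorm_sq, ← Matrix.dotProduct_mulVec,
    ← Matrix.vecMul_transpose, Matrix.vecMul_vecMul, ← Matrix.mulVec_transpose,
    Matrix.transpose_mul, Matrix.transpose_transpose, hQ.2, Matrix.one_mulVec]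

lemma le_two_mul_dotProduct_vecMul {P Q : Matrix (Fin d) (Fin d) ℝ} (hP : IsOrth P)
    (hQ : IsOrth Q) (y : Fin d → ℝ) :
    (2 - frob (P - Q) ^ 2) * vnorm y ^ 2 ≤ 2 * ((y ᵥ* P) ⬝ᵥ (y ᵥ* Q)) := by
  have hdiff : vnorm (y ᵥ* (P - Q)) ^ 2 ≤ frob (P - Q) ^ 2 * vnorm y ^ 2 := by
    rw [← mul_pow]
    exact pow_le_pow_left₀ (vnorm_nonneg _) (vnorm_vecMul_le_frob_mul y _) 2
  have hpolar : vnorm (y ᵥ* (P - Q)) ^ 2 = 2 * vnorm y ^ 2 - 2 * ((y ᵥ* P) ⬝ᵥ (y ᵥ* Q)) := by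
    rw [← dotProduct_self_eq_vnorm_sq, Matrix.vecMul_sub, sub_dotProduct, dotProduct_sub,
      dotProduct_sub, dotProduct_self_eq_vnorm_sq, dotProduct_self_eq_vnorm_sq,
      vnorm_vecMul_of_isOrth hP, vnorm_vecMul_of_isOrth hQ, dotProduct_comm (y ᵥ* Q)]
    ring
  linarith

end Orthogonal

section Blocks

variable {n d k : ℕ}

lemma blk_mul {l : ℕ} (X : Matrix (Fin n × Fin d) (Fin k) ℝ) (M : Matrix (Fin k) (Fin l) ℝ)
    (i : Fin n) : blk (X * M) i = blk X i * M := by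
  ext a b
  simp [blk, Matrix.mul_apply]

lemma blk_add (X Y : Matrix (Fin n × Fin d) (Fin k) ℝ) (i : Fin n) :
    blk (X + Y) i = blk X i + blk Y i := rfl

lemma blk_sub (X Y : Matrix (Fin n × Fin d) (Fin k) ℝ) (i : Fin n) :
    blk (X - Y) i = blk X i - blk Y i := rfl

lemma blk_smul (c : ℝ) (X : Matrix (Fin n × Fin d) (Fin k) ℝ) (i : Fin n) :
    blk (c • X) i = c • blk X i := rfl

lemma blk_zStack (i : Fin n) : blk (ZStack n d) i = 1 := by
  ext a b
  simp [blk, ZStack, Matrix.one_apply]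

lemma zStack_transpose_mul (S : Matrix (Fin n × Fin d) (Fin k) ℝ) :
    (ZStack n d)ᵀ * S = ∑ j, blk S j := by
  ext a b
  simp [Matrix.mul_apply, ZStack, blk, Matrix.sum_apply, Fintype.sum_prod_type]

lemma frob_sq_eq_sum_blk (X : Matrix (Fin n × Fin d) (Fin k) ℝ) :
    frob X ^ 2 = ∑ i, frob (blk X i) ^ 2 := by
  simp only [frob_sq, Fintype.sum_prod_type]
  rfl

end Blocks

section OrthBlocks

variable {n d : ℕ} {S : Matrix (Fin n × Fin d) (Fin d) ℝ}

lemma frob_eq_of_orthBlocks (hS : OrthBlocks S) : frob S = Real.sqrt (n * d) := by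
  rw [← Real.sqrt_sq (frob_nonneg S), frob_sq_eq_sum_blk]
  simp [frob_sq_of_isOrth (hS _)]

lemma vnorm_vecMul_sum_blk_le (hS : OrthBlocks S) (v : Fin d → ℝ) :
    vnorm (v ᵥ* ((ZStack n d)ᵀ * S)) ≤ n * vnorm v := by
  rw [zStack_transpose_mul, Matrix.vecMul_sum]
  refine (vnorm_sum_le _ _).trans_eq ?_
  simp [vnorm_vecMul_of_isOrth (hS _)]

lemma le_vnorm_vecMul_sum_blk (hS : OrthBlocks S) {Q : Matrix (Fin d) (Fin d) ℝ}
    (hQ : IsOrth Q) (v : Fin d → ℝ) :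
    (n - frob (S - ZStack n d * Q) ^ 2 / 2) * vnorm v ≤ vnorm (v ᵥ* ((ZStack n d)ᵀ * S)) := by
  set T := (ZStack n d)ᵀ * S
  have hfrob : frob (S - ZStack n d * Q) ^ 2 = ∑ j, frob (blk S j - Q) ^ 2 := by
    simp [frob_sq_eq_sum_blk, blk_sub, blk_mul, blk_zStack]
  have hdot : (2 * n - frob (S - ZStack n d * Q) ^ 2) * vnorm v ^ 2 ≤
      2 * ((v ᵥ* T) ⬝ᵥ (v ᵥ* Q)) := by
    calc (2 * n - frob (S - ZStack n d * Q) ^ 2) * vnorm v ^ 2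
        = ∑ j, (2 - frob (blk S j - Q) ^ 2) * vnorm v ^ 2 := by
          rw [hfrob, ← Finset.sum_mul, Finset.sum_sub_distrib]
          simp [mul_comm]
      _ ≤ ∑ j, 2 * ((v ᵥ* blk S j) ⬝ᵥ (v ᵥ* Q)) :=
          Finset.sum_le_sum fun j _ => le_two_mul_dotProduct_vecMul (hS j) hQ v
      _ = 2 * ((v ᵥ* T) ⬝ᵥ (v ᵥ* Q)) := by
          rw [← Finset.mul_sum, ← sum_dotProduct, ← Matrix.vecMul_sum, ← zStack_transpose_mul]
  have hcs : (v ᵥ* T) ⬝ᵥ (v ᵥ* Q) ≤ vnorm (v ᵥ* T) * vnorm v := by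
    simpa [vnorm_vecMul_of_isOrth hQ] using dotProduct_le_vnorm_mul_vnorm (v ᵥ* T) (v ᵥ* Q)
  rcases (vnorm_nonneg v).eq_or_lt with hv | hv
  · simp [← hv, vnorm_nonneg]
  · nlinarith

end OrthBlocks

lemma dF_nonneg {n d : ℕ} (X Y : Matrix (Fin n × Fin d) (Fin d) ℝ) : 0 ≤ dF X Y :=
  Real.sInf_nonneg fun _ ⟨_, _, hr⟩ => hr ▸ Real.sqrt_nonneg _

lemma le_dF_sq {n d : ℕ} {X Y : Matrix (Fin n × Fin d) (Fin d) ℝ} {t : ℝ}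
    (h : ∀ Q : Matrix (Fin d) (Fin d) ℝ, IsOrth Q → t ≤ frob (X - Y * Q) ^ 2) : t ≤ dF X Y ^ 2 := by
  rcases le_or_gt t 0 with ht | ht
  · exact ht.trans (sq_nonneg _)
  have hsqrt : √t ≤ dF X Y := le_csInf ⟨_, 1, isOrth_one, rfl⟩ fun _ ⟨Q, hQ, hr⟩ =>
    hr ▸ (Real.sqrt_le_sqrt (h Q hQ)).trans_eq (Real.sqrt_sq (frob_nonneg _))
  calc t = √t ^ 2 := (Real.sq_sqrt ht.le).symm
    _ ≤ dF X Y ^ 2 := pow_le_pow_left₀ (Real.sqrt_nonneg t) hsqrt 2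

lemma sub_mul_dF_sq_le {n d : ℕ} {X Y : Matrix (Fin n × Fin d) (Fin d) ℝ} {b k M : ℝ}
    (hk : 0 < k) (h : ∀ Q : Matrix (Fin d) (Fin d) ℝ, IsOrth Q → b - k * frob (X - Y * Q) ^ 2 ≤ M) :
    b - k * dF X Y ^ 2 ≤ M := by
  have := le_dF_sq (t := (b - M) / k) fun Q hQ => by
    rw [div_le_iff₀ hk]; linarith [h Q hQ]
  rw [div_le_iff₀ hk] at this
  linarith

section Lop

variable {n d m : ℕ} (A : Matrix (Fin d) (Fin m) ℝ) (W : Matrix (Fin n × Fin d) (Fin m) ℝ)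
  (σ : ℝ) (S : Matrix (Fin n × Fin d) (Fin d) ℝ) (i : Fin n)

/-- The noise part of the `i`-th block of `C S`, divided by `σ`. -/
noncomputable def noiseBlk : Matrix (Fin d) (Fin d) ℝ :=
  blk W i * Aᵀ * ((ZStack n d)ᵀ * S) + A * Wᵀ * S + σ • (blk W i * Wᵀ * S)

lemma blk_Lop : blk (Lop A W σ S) i =
    ((n : ℝ) * opNorm A ^ 2)⁻¹ • (A * Aᵀ * ((ZStack n d)ᵀ * S) + σ • noiseBlk A W σ S i) := by
  simp only [Lop, delta, noiseBlk, Matrix.add_mul, Matrix.smul_mul, blk_smul, blk_add, blk_mul,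
    Matrix.mul_assoc, blk_zStack, Matrix.one_mul]

variable {σ S}

lemma vnorm_vecMul_noiseBlk_le (hS : OrthBlocks S) (hσ : 0 ≤ σ) {u : Fin d → ℝ}
    (hu : vnorm u = 1) :
    vnorm (u ᵥ* noiseBlk A W σ S i) ≤ n * opNorm (blk W i * Aᵀ) +
      √((n : ℝ) * d) * opNorm W * opNorm A + σ * frob (blk W i * Wᵀ * S) := by
  have h1 : vnorm (u ᵥ* (blk W i * Aᵀ * ((ZStack n d)ᵀ * S))) ≤ n * opNorm (blk W i * Aᵀ) := by
    rw [← Matrix.vecMul_vecMul]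
    refine (vnorm_vecMul_sum_blk_le hS _).trans ?_
    gcongr
    simpa [hu] using vnorm_vecMul_le_opNorm_mul u (blk W i * Aᵀ)
  have h2 : vnorm (u ᵥ* (A * Wᵀ * S)) ≤ √((n : ℝ) * d) * opNorm W * opNorm A := by
    have hA : vnorm (u ᵥ* A) ≤ opNorm A := by simpa [hu] using vnorm_vecMul_le_opNorm_mul u A
    rw [← Matrix.vecMul_vecMul, ← Matrix.vecMul_vecMul, Matrix.vecMul_transpose]
    calc vnorm ((W *ᵥ (u ᵥ* A)) ᵥ* S) ≤ frob S * vnorm (W *ᵥ (u ᵥ* A)) :=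
          vnorm_vecMul_le_frob_mul _ S
      _ ≤ frob S * (opNorm W * opNorm A) := by
          refine mul_le_mul_of_nonneg_left ((vnorm_mulVec_le_opNorm_mul W _).trans ?_)
            (frob_nonneg S)
          exact mul_le_mul_of_nonneg_left hA (opNorm_nonneg W)
      _ = √((n : ℝ) * d) * opNorm W * opNorm A := by rw [frob_eq_of_orthBlocks hS, mul_assoc]
  have h3 : vnorm (u ᵥ* (σ • (blk W i * Wᵀ * S))) ≤ σ * frob (blk W i * Wᵀ * S) := by
    rw [Matrix.vecMul_smul, vnorm_smul, abs_of_nonneg hσ]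
    gcongr
    simpa [hu] using vnorm_vecMul_le_frob_mul u (blk W i * Wᵀ * S)
  simp only [noiseBlk, Matrix.vecMul_add]
  linarith [vnorm_add_le (u ᵥ* (blk W i * Aᵀ * ((ZStack n d)ᵀ * S))) (u ᵥ* (A * Wᵀ * S)),
    vnorm_add_le (u ᵥ* (blk W i * Aᵀ * ((ZStack n d)ᵀ * S)) + u ᵥ* (A * Wᵀ * S))
      (u ᵥ* (σ • (blk W i * Wᵀ * S)))]

lemma le_vnorm_vecMul_blk_Lop (hS : OrthBlocks S) {Q : Matrix (Fin d) (Fin d) ℝ} (hQ : IsOrth Q)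
    (hσ : 0 ≤ σ) {u : Fin d → ℝ} (hu : vnorm u = 1) :
    ((n - frob (S - ZStack n d * Q) ^ 2 / 2) * sigmaMin A ^ 2 -
        σ * (n * opNorm (blk W i * Aᵀ) + √((n : ℝ) * d) * opNorm W * opNorm A +
          σ * frob (blk W i * Wᵀ * S))) / (n * opNorm A ^ 2) ≤
      vnorm (u ᵥ* blk (Lop A W σ S) i) := by
  have hsignal : (n - frob (S - ZStack n d * Q) ^ 2 / 2) * sigmaMin A ^ 2 ≤
      vnorm (u ᵥ* (A * Aᵀ * ((ZStack n d)ᵀ * S))) := by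
    rw [← Matrix.vecMul_vecMul]
    have h1 := le_vnorm_vecMul_sum_blk hS hQ (u ᵥ* (A * Aᵀ))
    have h2 := sigmaMin_sq_le_vnorm_vecMul_mul_transpose A hu
    rcases le_total 0 (n - frob (S - ZStack n d * Q) ^ 2 / 2) with hc | hc
    · exact (mul_le_mul_of_nonneg_left h2 hc).trans h1
    · nlinarith [vnorm_nonneg ((u ᵥ* (A * Aᵀ)) ᵥ* ((ZStack n d)ᵀ * S))]
  have hnoise := mul_le_mul_of_nonneg_left (vnorm_vecMul_noiseBlk_le A W i hS hσ hu) hσ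
  rw [blk_Lop, Matrix.vecMul_smul, vnorm_smul, abs_of_nonneg (by positivity), div_eq_inv_mul,
    Matrix.vecMul_add, Matrix.vecMul_smul]
  refine mul_le_mul_of_nonneg_left ?_ (by positivity)
  calc _ ≤ vnorm (u ᵥ* (A * Aᵀ * ((ZStack n d)ᵀ * S))) - σ * vnorm (u ᵥ* noiseBlk A W σ S i) := by
        linarith
    _ = vnorm (u ᵥ* (A * Aᵀ * ((ZStack n d)ᵀ * S))) - vnorm (σ • u ᵥ* noiseBlk A W σ S i) := by
        rw [vnorm_smul, abs_of_nonneg hσ]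
    _ ≤ _ := vnorm_sub_le_vnorm_add _ _

lemma sigmaMin_blk_Lop_ge [Nonempty (Fin d)] (hn : 0 < n) (hA : 0 < sigmaMin A)
    (hS : OrthBlocks S) (hσ : 0 ≤ σ) :
    ((n - dF S (ZStack n d) ^ 2 / 2) * sigmaMin A ^ 2 -
        σ * (n * opNorm (blk W i * Aᵀ) + √((n : ℝ) * d) * opNorm W * opNorm A +
          σ * frob (blk W i * Wᵀ * S))) / (n * opNorm A ^ 2) ≤
      sigmaMin (blk (Lop A W σ S) i) := by
  have ha : 0 < opNorm A := hA.trans_le (sigmaMin_le_opNorm A)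
  set E := n * opNorm (blk W i * Aᵀ) + √((n : ℝ) * d) * opNorm W * opNorm A +
    σ * frob (blk W i * Wᵀ * S)
  have key := sub_mul_dF_sq_le (X := S) (Y := ZStack n d) (M := sigmaMin (blk (Lop A W σ S) i))
    (b := (n * sigmaMin A ^ 2 - σ * E) / (n * opNorm A ^ 2))
    (k := sigmaMin A ^ 2 / (2 * n * opNorm A ^ 2)) (by positivity) fun Q hQ =>
      (le_sigmaMin _ fun u hu => le_vnorm_vecMul_blk_Lop A W i hS hQ hσ hu).trans_eq'
        (by simp only [E]; ring)
  exact key.trans_eq' (by simp only [E]; ring)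

end Lop

lemma sqrt_le_sqrt_add_sqrt_mul_sqrt_log {n m : ℕ} {γ : ℝ} (hγ : 2 ≤ γ) (hm : 1 ≤ m) :
    √(n : ℝ) ≤ √(m : ℝ) + √(n : ℝ) * √(2 * γ * Real.log n) := by
  rcases Nat.lt_or_ge n 2 with hn | hn
  · interval_cases n <;> simp [Real.one_le_sqrt.2 (show (1 : ℝ) ≤ m by exact_mod_cast hm)]
  · have hlog : Real.log 2 ≤ Real.log n := Real.log_le_log two_pos (by exact_mod_cast hn)
    have hL : 1 ≤ √(2 * γ * Real.log n) :=
      Real.one_le_sqrt.2 (by nlinarith [Real.log_two_gt_d9])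
    nlinarith [Real.sqrt_nonneg (m : ℝ), Real.sqrt_nonneg (n : ℝ)]

lemma bnd1_eq (n d m : ℕ) (γ : ℝ) :
    bnd1 n d m γ = √((n : ℝ) * d) + √(m : ℝ) + √(n : ℝ) * √(2 * γ * Real.log n) := by
  rw [bnd1, ← Real.sqrt_mul (Nat.cast_nonneg n)]
  ring_nf

lemma add_mul_le_three_mul {sn sd sm L δ : ℝ} (hsn : 1 ≤ sn) (hsd : 1 ≤ sd) (hsm : 0 ≤ sm)
    (hL : 0 ≤ L) (hnL : sn ≤ sm + sn * L) (hδ : δ ≤ 1 / (1024 * sd)) :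
    sn * (2 * sd + L) + (sn * sd + sm + L) + δ * (sn * sd + sm + sn * L) ≤
      3 * (sn * sd + sm + sn * L) := by
  have hβ : sn * sd + sm + sn * L ≤ 2 * sd * (sm + sn * L) := by nlinarith
  have hδβ : δ * (sn * sd + sm + sn * L) ≤ 2 * sm + sn * L :=
    calc δ * (sn * sd + sm + sn * L) ≤ 1 / (1024 * sd) * (2 * sd * (sm + sn * L)) := by
          gcongr
      _ ≤ 2 * sm + sn * L := by
          field_simp
          nlinarith [mul_nonneg (zero_le_one.trans hsn) hL]
  nlinarith [mul_nonneg hL (sub_nonneg.2 hsn)]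

lemma noise_budget {n d m a s σ ε L w ω F : ℝ} (hn : 1 ≤ n) (hd : 1 ≤ d)
    (hs : 0 < s) (hsa : s ≤ a) (hL : 0 ≤ L) (hnL : √n ≤ √m + √n * L) (hσ : 0 ≤ σ)
    (hε : ε = 1 / (32 * (a / s) ^ 2 * √d))
    (hσ2 : σ ≤ ε ^ 2 * d / (6 * (a / s) ^ 2) * (√n * a) / (√d * (√(n * d) + √m + √n * L)))
    (hw : w ≤ (2 * √d + L) * a) (hω : ω ≤ √(n * d) + √m + L)
    (hF : F ≤ 6 * √d * (√(n * d) + √m + √n * L) ^ 2) :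
    σ * (n * w + √(n * d) * ω * a + σ * F) ≤ ε ^ 2 * n * d * s ^ 2 / 2 := by
  obtain ⟨sn, hsn, rfl⟩ : ∃ x : ℝ, 1 ≤ x ∧ n = x ^ 2 :=
    ⟨√n, Real.one_le_sqrt.2 hn, (Real.sq_sqrt (by linarith)).symm⟩
  obtain ⟨sd, hsd, rfl⟩ : ∃ x : ℝ, 1 ≤ x ∧ d = x ^ 2 :=
    ⟨√d, Real.one_le_sqrt.2 hd, (Real.sq_sqrt (by linarith)).symm⟩
  have hsqrt : √(sn ^ 2) = sn ∧ √(sd ^ 2) = sd ∧ √(sn ^ 2 * sd ^ 2) = sn * sd :=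
    ⟨Real.sqrt_sq (by positivity), Real.sqrt_sq (by positivity),
      by rw [← mul_pow, Real.sqrt_sq (by positivity)]⟩
  simp only [hsqrt] at hnL hσ2 hF hε hw hω ⊢
  have ha : 0 < a := hs.trans_le hsa
  set β1 := sn * sd + √m + sn * L
  set X := sn * (2 * sd + L) + (sn * sd + √m + L)
  set σ0 := ε ^ 2 * sd ^ 2 / (6 * (a / s) ^ 2) * (sn * a) / (sd * β1)
  -- `lam` is a third of the budget; the two noise terms cost `lam * X / β1` and `lam * δ`.
  set lam := ε ^ 2 * sn ^ 2 * sd ^ 2 * s ^ 2 / 6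
  set δ := ε ^ 2 * s ^ 2 * sd / a ^ 2
  have hβ1 : 0 < β1 := by positivity
  have hδ : δ ≤ 1 / (1024 * sd) := by
    have h6 : (s / a) ^ 6 ≤ 1 := pow_le_one₀ (by positivity) ((div_le_one ha).2 hsa)
    have : δ = (s / a) ^ 6 / (1024 * sd) := by
      simp only [δ, hε]; field_simp; ring
    rw [this]; gcongr
  have hP : sn ^ 2 * w + sn * sd * ω * a ≤ sn * sd * a * X := by
    have h1 : sn ^ 2 * w ≤ sn ^ 2 * sd * ((2 * sd + L) * a) :=
      calc sn ^ 2 * w ≤ sn ^ 2 * ((2 * sd + L) * a) * 1 := by rw [mul_one]; gcongr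
        _ ≤ sn ^ 2 * ((2 * sd + L) * a) * sd := by gcongr
        _ = _ := by ring
    have h2 : sn * sd * ω * a ≤ sn * sd * a * (sn * sd + √m + L) := by
      rw [mul_right_comm]; gcongr
    linarith
  have hσ0 : 0 ≤ σ0 := hσ.trans hσ2
  calc σ * (sn ^ 2 * w + sn * sd * ω * a + σ * F)
      ≤ σ0 * (sn * sd * a * X) + σ0 ^ 2 * (6 * sd * β1 ^ 2) := by
        rw [mul_add, ← mul_assoc, ← sq]
        have hX0 : 0 ≤ X := by positivity
        gcongr ?_ + ?_
        · exact (mul_le_mul_of_nonneg_left hP hσ).trans (by gcongr)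
        · exact (mul_le_mul_of_nonneg_left hF (sq_nonneg σ)).trans (by gcongr)
    _ = lam * ((X + δ * β1) / β1) := by
        simp only [σ0, lam, δ]; field_simp
    _ ≤ lam * 3 := by
        gcongr
        rw [div_le_iff₀ hβ1]
        exact add_mul_le_three_mul hsn hsd (Real.sqrt_nonneg m) hL hnL hδ
    _ = ε ^ 2 * sn ^ 2 * sd ^ 2 * s ^ 2 / 2 := by ring

/-- Proposition 5.5, second part: for S ∈ N_ε ∩ N_{ξ,∞}, every d×d block of
LS has smallest singular value at least (1 − ε²d)/κ². -/
theorem Lop_block_sigmaMin (n d m : ℕ) (hn : 1 ≤ n) (hd : 1 ≤ d) (hm : d ≤ m)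
    (A : Matrix (Fin d) (Fin m) ℝ) (hA : 0 < sigmaMin A)
    (W : Matrix (Fin n × Fin d) (Fin m) ℝ) (σ γ : ℝ) (hσ : 0 < σ) (hγ : 2 ≤ γ)
    (hW : opNorm W ≤ bnd2 n d m γ)
    (hWA : ∀ i, opNorm (blk W i * Aᵀ) ≤
      (2 * Real.sqrt (d : ℝ) + Real.sqrt (2 * γ * Real.log n)) * opNorm A)
    (ε ξ : ℝ) (hε : ε = 1 / (32 * kappa A ^ 2 * Real.sqrt (d : ℝ))) (hξ : ξ = 6)
    (hσ2 : σ ≤ ε ^ 2 * (d : ℝ) / (6 * kappa A ^ 2) *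
      (Real.sqrt (n : ℝ) * opNorm A) / (Real.sqrt (d : ℝ) * bnd1 n d m γ)) :
    ∀ S : Matrix (Fin n × Fin d) (Fin d) ℝ, memNeps ε S → memNxi W γ ξ S → ∀ i,
      (1 - ε ^ 2 * (d : ℝ)) / kappa A ^ 2 ≤ sigmaMin (blk (Lop A W σ S) i) := by
  rintro S ⟨hS, hdist⟩ ⟨-, hxi⟩ i
  subst hξ
  have : Nonempty (Fin d) := ⟨⟨0, hd⟩⟩
  have hnoise := noise_budget (n := n) (d := d) (F := frob (blk W i * Wᵀ * S))
    (by exact_mod_cast hn) (by exact_mod_cast hd) hA (sigmaMin_le_opNorm A) (Real.sqrt_nonneg _)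
    (sqrt_le_sqrt_add_sqrt_mul_sqrt_log hγ (hd.trans hm)) hσ.le hε (by rwa [bnd1_eq] at hσ2)
    (hWA i) hW (by rw [← bnd1_eq]; exact hxi i)
  have hdF : dF S (ZStack n d) ^ 2 ≤ ε ^ 2 * (n * d) :=
    calc dF S (ZStack n d) ^ 2 ≤ (ε * √((n : ℝ) * d)) ^ 2 := by gcongr; exact dF_nonneg _ _
      _ = ε ^ 2 * (n * d) := by rw [mul_pow, Real.sq_sqrt (by positivity)]
  refine le_trans ?_ (sigmaMin_blk_Lop_ge A W i (by omega) hA hS hσ.le)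
  calc (1 - ε ^ 2 * d) / kappa A ^ 2
      = ((n - ε ^ 2 * (n * d) / 2) * sigmaMin A ^ 2 - ε ^ 2 * n * d * sigmaMin A ^ 2 / 2) /
          (n * opNorm A ^ 2) := by
        rw [kappa]; field_simp; ring
    _ ≤ _ := by gcongr

end GOPP
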